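/- arXiv:1307.2108 — 2 statements merged into one kernel-verified Lean document; each statement's English description precedes it below -/
import Mathlib

section
/- Let F be a group and φ₁, φ₂ ∈ Aut(F), with suspensions G₁ = F ⋊_{φ₁} ℤ and G₂ = F ⋊_{φ₂} ℤ, fibers ι₁(F), ι₂(F) and transverse elements t₁, t₂. Then φ₁ and φ₂ are conjugate in Out(F) if and only if there exists a group isomorphism Ψ : G₁ → G₂ whose induced map on abelianizations sends the image of the fiber ι₁(F) into the image of the fiber ι₂(F), and sends the class of t₁ into (class of t₂)·(image of the fiber ι₂(F)). -/
/-!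
An `Out(F)`-conjugacy `ψ ∘ φ₁ = φ₂ ∘ (conjugation by f₀⁻¹) ∘ ψ` is exactly the relation needed
for `inl f ↦ inl (ψ f)`, `t₁ ↦ t₂ f₀⁻¹` to define a homomorphism of suspensions; the same
relation read backwards (via `ψ⁻¹`) gives its inverse, and both preserve the abelianized fiber
and the class of `t` modulo it.

Conversely, the projections `G_i → ℤ` factor through the abelianizations and kill the fibers,
so the abelianized conditions say exactly that `Ψ` commutes with these projections. Then `Ψ`
maps the kernel `ι₁(F)` onto `ι₂(F)`, giving `ψ ∈ Aut(F)`, and `Ψ t₁ = g t₂` with `g ∈ F`.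
Applying `Ψ` to `t₁ f t₁⁻¹ = φ₁ f` yields `ψ (φ₁ f) = g φ₂ (ψ f) g⁻¹`.
-/

open SemidirectProduct

theorem conj_zpow_of_conj {F G : Type*} [Group F] [Group G] {φ : MulAut F} (m : F →* G)
    (c : G) (h : ∀ f, c * m f * c⁻¹ = m (φ f)) (n : ℤ) (f : F) :
    c ^ n * m f * (c ^ n)⁻¹ = m ((φ ^ n) f) := by
  induction n using Int.induction_on generalizing f with
  | zero => simp
  | succ n ih =>
    calc c ^ (n + 1 : ℤ) * m f * (c ^ (n + 1 : ℤ))⁻¹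
        = c ^ (n : ℤ) * (c * m f * c⁻¹) * (c ^ (n : ℤ))⁻¹ := by group
      _ = m ((φ ^ (n + 1 : ℤ)) f) := by rw [h, ih, zpow_add_one, MulAut.mul_apply]
  | pred n ih =>
    have h_inv : c⁻¹ * m f * c = m (φ⁻¹ f) := by
      rw [← MulAut.apply_inv_self F φ f, ← h, MulAut.inv_apply_self]
      group
    calc c ^ (-n - 1 : ℤ) * m f * (c ^ (-n - 1 : ℤ))⁻¹
        = c ^ (-n : ℤ) * (c⁻¹ * m f * c) * (c ^ (-n : ℤ))⁻¹ := by group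
      _ = m ((φ ^ (-n - 1 : ℤ)) f) := by rw [h_inv, ih, zpow_sub_one, MulAut.mul_apply]

section

variable {F : Type*} [Group F]

abbrev Suspension (φ : MulAut F) := F ⋊[zpowersHom (MulAut F) φ] Multiplicative ℤ

def IsOutConjBy (φ₁ φ₂ ψ : MulAut F) (f₀ : F) : Prop :=
  ∀ f, ψ (φ₁ f) = φ₂ (f₀⁻¹ * ψ f * f₀)

theorem IsOutConjBy.symm {φ₁ φ₂ ψ : MulAut F} {f₀ : F} (h : IsOutConjBy φ₁ φ₂ ψ f₀) :
    IsOutConjBy φ₂ φ₁ ψ⁻¹ (ψ⁻¹ f₀⁻¹) := by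
  intro f
  apply ψ.injective
  rw [← MulAut.mul_apply, mul_inv_cancel, h]
  simp [mul_assoc]

namespace Suspension

variable {φ φ₁ φ₂ ψ : MulAut F} {f₀ : F} {G : Type*} [Group G]

def t : Suspension φ := inr (Multiplicative.ofAdd 1)

theorem t_mul_inl_mul_t_inv (f : F) : (t : Suspension φ) * inl f * t⁻¹ = inl (φ f) := by
  rw [t, ← map_inv, ← inl_aut]
  simp

def lift (m : F →* G) (c : G) (h : ∀ f, c * m f * c⁻¹ = m (φ f)) : Suspension φ →* G :=
  SemidirectProduct.lift m (zpowersHom G c) fun n => MonoidHom.ext fun f => by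
    simpa [← map_zpow] using (conj_zpow_of_conj m c h n.toAdd f).symm

@[simp]
theorem lift_inl (m : F →* G) (c : G) (h : ∀ f, c * m f * c⁻¹ = m (φ f)) (f : F) :
    Suspension.lift m c h (inl f) = m f :=
  SemidirectProduct.lift_inl _ _ _ _

@[simp]
theorem lift_t (m : F →* G) (c : G) (h : ∀ f, c * m f * c⁻¹ = m (φ f)) :
    Suspension.lift m c h t = c := by
  simp [Suspension.lift, t]

theorem hom_ext {Φ Φ' : Suspension φ →* G} (hinl : ∀ f, Φ (inl f) = Φ' (inl f))
    (ht : Φ t = Φ' t) : Φ = Φ' :=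
  SemidirectProduct.hom_ext (MonoidHom.ext hinl) (MonoidHom.ext_mint ht)

theorem t_mul_inl_inv_conj_of_isOutConjBy (h : IsOutConjBy φ₁ φ₂ ψ f₀) (f : F) :
    (t * inl f₀⁻¹ : Suspension φ₂) * inl (ψ f) * (t * inl f₀⁻¹)⁻¹ = inl (ψ (φ₁ f)) := by
  rw [h, ← t_mul_inl_mul_t_inv]
  simp only [map_mul, map_inv]
  group

def homOfIsOutConjBy (h : IsOutConjBy φ₁ φ₂ ψ f₀) : Suspension φ₁ →* Suspension φ₂ :=
  Suspension.lift (inl.comp ψ.toMonoidHom) (t * inl f₀⁻¹) (t_mul_inl_inv_conj_of_isOutConjBy h)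

@[simp]
theorem homOfIsOutConjBy_inl (h : IsOutConjBy φ₁ φ₂ ψ f₀) (f : F) :
    homOfIsOutConjBy h (inl f) = inl (ψ f) :=
  Suspension.lift_inl _ _ _ f

@[simp]
theorem homOfIsOutConjBy_t (h : IsOutConjBy φ₁ φ₂ ψ f₀) :
    homOfIsOutConjBy h t = t * inl f₀⁻¹ :=
  lift_t _ _ _

theorem homOfIsOutConjBy_symm_comp (h : IsOutConjBy φ₁ φ₂ ψ f₀) :
    (homOfIsOutConjBy h.symm).comp (homOfIsOutConjBy h) = MonoidHom.id _ :=
  Suspension.hom_ext (fun f => by simp) (by simp [map_mul])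

theorem homOfIsOutConjBy_comp_symm (h : IsOutConjBy φ₁ φ₂ ψ f₀) :
    (homOfIsOutConjBy h).comp (homOfIsOutConjBy h.symm) = MonoidHom.id _ :=
  Suspension.hom_ext (fun f => by simp) (by simp [map_mul])

def mulEquivOfIsOutConjBy (h : IsOutConjBy φ₁ φ₂ ψ f₀) : Suspension φ₁ ≃* Suspension φ₂ :=
  (homOfIsOutConjBy h).toMulEquiv (homOfIsOutConjBy h.symm) (homOfIsOutConjBy_symm_comp h)
    (homOfIsOutConjBy_comp_symm h)

theorem mulEquivOfIsOutConjBy_inl (h : IsOutConjBy φ₁ φ₂ ψ f₀) (f : F) :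
    mulEquivOfIsOutConjBy h (inl f) = inl (ψ f) :=
  homOfIsOutConjBy_inl h f

theorem mulEquivOfIsOutConjBy_t (h : IsOutConjBy φ₁ φ₂ ψ f₀) :
    mulEquivOfIsOutConjBy h t = t * inl f₀⁻¹ :=
  homOfIsOutConjBy_t h

theorem map_range_inl_eq_of_rightHom_comp (Ψ : Suspension φ₁ ≃* Suspension φ₂)
    (hΨ : rightHom.comp (Ψ : Suspension φ₁ →* Suspension φ₂) = rightHom) :
    (inl.range).map (Ψ : Suspension φ₁ →* Suspension φ₂) = (inl : F →* Suspension φ₂).range := by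
  have hΨ_symm : rightHom.comp (Ψ.symm : Suspension φ₂ →* Suspension φ₁) = rightHom := by
    rw [← hΨ, MonoidHom.comp_assoc]
    ext
    simp
  rw [range_inl_eq_ker_rightHom, range_inl_eq_ker_rightHom, Subgroup.map_equiv_eq_comap_symm,
    MonoidHom.comap_ker, hΨ_symm]

theorem exists_mulAut_inl_of_rightHom_comp (Ψ : Suspension φ₁ ≃* Suspension φ₂)
    (hΨ : rightHom.comp (Ψ : Suspension φ₁ →* Suspension φ₂) = rightHom) :
    ∃ ψ : MulAut F, ∀ f, Ψ (inl f) = inl (ψ f) :=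
  ⟨(MonoidHom.ofInjective inl_injective).trans <| (Ψ.subgroupMap _).trans <|
      (MulEquiv.subgroupCongr (map_range_inl_eq_of_rightHom_comp Ψ hΨ)).trans
        (MonoidHom.ofInjective inl_injective).symm,
    fun f => by simp only [MulEquiv.trans_apply, MonoidHom.apply_ofInjective_symm]; rfl⟩

theorem exists_inl_mul_t_of_rightHom_comp (Ψ : Suspension φ₁ →* Suspension φ₂)
    (hΨ : rightHom.comp Ψ = rightHom) : ∃ g, Ψ t = inl g * t := by
  refine ⟨(Ψ t).left, ?_⟩
  have h_right : (Ψ t).right = (t : Suspension φ₁).right := DFunLike.congr_fun hΨ t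
  conv_lhs => rw [← inl_left_mul_inr_right (Ψ t), h_right]
  rfl

theorem exists_isOutConjBy_of_rightHom_comp (Ψ : Suspension φ₁ ≃* Suspension φ₂)
    (hΨ : rightHom.comp (Ψ : Suspension φ₁ →* Suspension φ₂) = rightHom) :
    ∃ ψ f₀, IsOutConjBy φ₁ φ₂ ψ f₀ := by
  obtain ⟨ψ, hψ⟩ := exists_mulAut_inl_of_rightHom_comp Ψ hΨ
  obtain ⟨g, hg⟩ := exists_inl_mul_t_of_rightHom_comp (Ψ : Suspension φ₁ →* Suspension φ₂) hΨ
  refine ⟨ψ, (φ₂⁻¹ g)⁻¹, fun f => ?_⟩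
  apply (inl_injective : Function.Injective (inl : F → Suspension φ₂))
  calc (inl (ψ (φ₁ f)) : Suspension φ₂) = Ψ (t * inl f * t⁻¹ : Suspension φ₁) := by
        rw [t_mul_inl_mul_t_inv, hψ]
    _ = inl g * (t * inl (ψ f) * t⁻¹) * (inl g)⁻¹ := by
        simp only [map_mul, map_inv, hψ, show Ψ t = inl g * t from hg]
        group
    _ = inl (φ₂ ((φ₂⁻¹ g)⁻¹⁻¹ * ψ f * (φ₂⁻¹ g)⁻¹)) := by
        rw [t_mul_inl_mul_t_inv]
        simp

theorem abelianization_map_fiber_le (Ψ : Suspension φ₁ →* Suspension φ₂)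
    (h : ∀ f, Ψ (inl f) ∈ (inl : F →* Suspension φ₂).range) :
    ((inl.range).map Abelianization.of).map (Abelianization.map Ψ) ≤
      ((inl : F →* Suspension φ₂).range).map Abelianization.of := by
  rintro _ ⟨_, ⟨_, ⟨f, rfl⟩, rfl⟩, rfl⟩
  exact ⟨_, h f, rfl⟩

theorem rightHom_comp_eq_of_abelianization_map (Ψ : Suspension φ₁ →* Suspension φ₂)
    (hfib : ((inl.range).map Abelianization.of).map (Abelianization.map Ψ) ≤
      ((inl : F →* Suspension φ₂).range).map Abelianization.of)
    {x : Abelianization (Suspension φ₂)} (hx : x ∈ (inl.range).map Abelianization.of)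
    (ht : Abelianization.map Ψ (Abelianization.of t) = Abelianization.of t * x) :
    rightHom.comp Ψ = rightHom := by
  set q := Abelianization.lift (rightHom : Suspension φ₂ →* Multiplicative ℤ)
  have hq : ∀ y ∈ (inl.range).map Abelianization.of, q y = 1 := by
    rintro _ ⟨_, ⟨f, rfl⟩, rfl⟩
    simp [q]
  have hq_map : ∀ g, rightHom (Ψ g) = q (Abelianization.map Ψ (Abelianization.of g)) := by
    simp [q]
  refine Suspension.hom_ext (fun f => ?_) ?_
  · rw [MonoidHom.comp_apply, hq_map, hq _ (hfib ⟨_, ⟨_, ⟨f, rfl⟩, rfl⟩, rfl⟩), rightHom_inl]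
  · rw [MonoidHom.comp_apply, hq_map, ht, map_mul, hq x hx, mul_one, Abelianization.lift_apply_of]
    rfl

end Suspension

end

open Suspension in
/-- Two automorphisms of `F` are conjugate in `Out(F)` if and only if there is an
isomorphism of the suspensions whose induced map on abelianizations sends the image
of the fiber into the image of the fiber, and sends the class of `t₁` into
`(class of t₂)·(image of the fiber)`. -/
theorem conj_out_iff_abelianized_fiber_orientation_preserving_iso
    {F : Type*} [Group F] (φ₁ φ₂ : MulAut F) :
    let G₁ := F ⋊[zpowersHom (MulAut F) φ₁] Multiplicative ℤ
    let G₂ := F ⋊[zpowersHom (MulAut F) φ₂] Multiplicative ℤ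
    let ι₁ : F →* G₁ := SemidirectProduct.inl
    let ι₂ : F →* G₂ := SemidirectProduct.inl
    let t₁ : G₁ := SemidirectProduct.inr (Multiplicative.ofAdd 1)
    let t₂ : G₂ := SemidirectProduct.inr (Multiplicative.ofAdd 1)
    ((∃ (ψ : MulAut F) (f₀ : F), ∀ f : F, ψ (φ₁ f) = φ₂ (f₀⁻¹ * ψ f * f₀)) ↔
      ∃ Ψ : G₁ ≃* G₂,
        Subgroup.map (Abelianization.map Ψ.toMonoidHom)
            (Subgroup.map Abelianization.of ι₁.range) ≤
          Subgroup.map Abelianization.of ι₂.range ∧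
        ∃ x ∈ Subgroup.map Abelianization.of ι₂.range,
          Abelianization.map Ψ.toMonoidHom (Abelianization.of t₁) =
            Abelianization.of t₂ * x) := by
  intro G₁ G₂ ι₁ ι₂ t₁ t₂
  constructor
  · rintro ⟨ψ, f₀, h : IsOutConjBy φ₁ φ₂ ψ f₀⟩
    refine ⟨mulEquivOfIsOutConjBy h,
      abelianization_map_fiber_le _ fun f => ⟨ψ f, (mulEquivOfIsOutConjBy_inl h f).symm⟩,
      Abelianization.of (inl f₀⁻¹), ⟨_, ⟨f₀⁻¹, rfl⟩, rfl⟩, ?_⟩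
    rw [Abelianization.map_of, ← map_mul]
    exact congrArg Abelianization.of (mulEquivOfIsOutConjBy_t h)
  · rintro ⟨Ψ, hfib, x, hx, ht⟩
    exact exists_isOutConjBy_of_rightHom_comp Ψ
      (rightHom_comp_eq_of_abelianization_map _ hfib hx ht)
end

section
/- Let G be a group containing a nontrivial, finitely generated normal subgroup of infinite index. Then G is not a free group. In particular, if F is an infinite finitely generated group and G = F ⋊_φ ℤ is a suspension of F, then G is not a free group. -/
/-!
Let `N` be a nontrivial normal subgroup of a free group `F`, generated by a finite set `S`.
If `F` has rank at least two, the reduced word of any `g` is a prefix of the reduced word of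
an element of `N`: conjugate a nontrivial element of `N` first by a suitable letter `x` and then
by `g`, with `x` chosen so that nothing cancels. Conversely, every prefix of the reduced word of
an element of `N` lies in the coset of a prefix of a generator in `S`, since free reduction and
left multiplication by elements of the normal subgroup `N` keep prefixes in their cosets.
Hence `F ⧸ N` is finite. In rank at most one `F` is cyclic, where every nontrivial subgroup has
finite index. For a suspension `F ⋊ ℤ` the fiber is a nontrivial finitely generated normal
subgroup with quotient `ℤ`.
-/

open List

theorem QuotientGroup.mk_mul_of_mem_left {G : Type*} [Group G] {N : Subgroup G} [N.Normal]
    {n : G} (hn : n ∈ N) (z : G) : ((n * z : G) : G ⧸ N) = z := by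
  rw [QuotientGroup.mk_mul, (QuotientGroup.eq_one_iff n).mpr hn, one_mul]

theorem Subgroup.FG.map {G G' : Type*} [Group G] [Group G'] {P : Subgroup G} (h : P.FG)
    (f : G →* G') : (P.map f).FG := by
  classical
  obtain ⟨S, rfl⟩ := h
  exact ⟨S.image f, by rw [Finset.coe_image, MonoidHom.map_closure]⟩

theorem IsCyclic.finiteIndex_of_ne_bot {G : Type*} [Group G] [IsCyclic G] {N : Subgroup G}
    [N.Normal] (hN : N ≠ ⊥) : N.FiniteIndex := by
  obtain ⟨a, ha⟩ := IsCyclic.exists_generator (α := G)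
  obtain ⟨w, hwN, hw⟩ := N.bot_or_exists_ne_one.resolve_left hN
  obtain ⟨k, rfl⟩ := Subgroup.mem_zpowers_iff.mp (ha w)
  have hfin : IsOfFinOrder (a : G ⧸ N) := isOfFinOrder_iff_zpow_eq_one.mpr
    ⟨k, by rintro rfl; simp at hw, (QuotientGroup.eq_one_iff _).mpr hwN⟩
  have hgen (q : G ⧸ N) : q ∈ Subgroup.zpowers (a : G ⧸ N) := by
    induction q using QuotientGroup.induction_on with | H g => ?_
    obtain ⟨m, rfl⟩ := Subgroup.mem_zpowers_iff.mp (ha g)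
    exact ⟨m, rfl⟩
  have : Finite (G ⧸ N) :=
    Set.finite_univ_iff.mp ((finite_zpowers.mpr hfin).subset fun q _ => hgen q)
  exact Subgroup.finiteIndex_of_finite_quotient

theorem List.finite_setOf_prefix {α : Type*} (l : List α) : {p | p <+: l}.Finite :=
  l.inits.finite_toSet.subset fun p hp => (mem_inits p l).mpr hp

namespace FreeGroup

variable {ι : Type*}

theorem eq_inv_letter_comm {a b : ι × Bool} : a = (b.1, !b.2) ↔ b = (a.1, !a.2) := by
  obtain ⟨a₁, a₂⟩ := a
  obtain ⟨b₁, b₂⟩ := b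
  simp only [Prod.mk.injEq]
  constructor <;> rintro ⟨rfl, rfl⟩ <;> simp

theorem exists_letter_ne [Nontrivial ι] (u v z : ι × Bool) : ∃ x, x ≠ u ∧ x ≠ v ∧ x ≠ z := by
  classical
  obtain ⟨a, b, hab⟩ := exists_pair_ne ι
  have hcard : ({u, v, z} : Finset (ι × Bool)).card <
      ({(a, true), (a, false), (b, true), (b, false)} : Finset (ι × Bool)).card := by
    refine Finset.card_le_three.trans_lt ?_
    simp [hab]
  obtain ⟨x, -, hx⟩ := Finset.exists_mem_notMem_of_card_lt_card hcard
  simp only [Finset.mem_insert, Finset.mem_singleton, not_or] at hx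
  exact ⟨x, hx⟩

theorem Red.Step.exists_prefix_mk_eq {L₁ L₂ p : List (ι × Bool)} (h : Red.Step L₁ L₂)
    (hp : p <+: L₂) : ∃ q, q <+: L₁ ∧ mk q = mk p := by
  cases h with | @not A B x b =>
  obtain ⟨u, hu⟩ := hp
  rcases append_eq_append_iff.mp hu with ⟨a', rfl, -⟩ | ⟨c', rfl, rfl⟩
  · exact ⟨p, by simp, rfl⟩
  · exact ⟨A ++ (x, b) :: (x, !b) :: c', ⟨u, by simp⟩, Quot.sound Red.Step.not⟩

theorem Red.exists_prefix_mk_eq {L₁ L₂ p : List (ι × Bool)} (h : Red L₁ L₂) (hp : p <+: L₂) :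
    ∃ q, q <+: L₁ ∧ mk q = mk p := by
  induction h generalizing p with
  | refl => exact ⟨p, hp, rfl⟩
  | tail _ hstep ih =>
    obtain ⟨q, hq, hqp⟩ := hstep.exists_prefix_mk_eq hp
    obtain ⟨r, hr, hrq⟩ := ih hq
    exact ⟨r, hr, hrq.trans hqp⟩

variable [DecidableEq ι]

theorem exists_prefix_toWord_mk_eq {x y : FreeGroup ι} {p : List (ι × Bool)}
    (hp : p <+: (x * y).toWord) : ∃ q, q <+: x.toWord ++ y.toWord ∧ mk q = mk p :=
  Red.exists_prefix_mk_eq reduce.red (toWord_mul x y ▸ hp)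

theorem toWord_mul_mul_inv {g v : FreeGroup ι} (hv : v ≠ 1)
    (hhead : ∀ a ∈ g.toWord.getLast?, ∀ b ∈ v.toWord.head?, b ≠ (a.1, !a.2))
    (hlast : ∀ a ∈ g.toWord.getLast?, ∀ b ∈ v.toWord.getLast?, b ≠ a) :
    (g * v * g⁻¹).toWord = g.toWord ++ v.toWord ++ invRev g.toWord := by
  have hv' : v.toWord ≠ [] := by simpa using hv
  have hgv : IsReduced (g.toWord ++ v.toWord) := by
    refine isChain_append.mpr ⟨isReduced_toWord, isReduced_toWord, fun a ha b hb hab => ?_⟩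
    by_contra h
    exact hhead a ha b hb (Prod.ext hab.symm (Bool.eq_not_iff.mpr (Ne.symm h)))
  have hgvg : IsReduced (g.toWord ++ v.toWord ++ invRev g.toWord) := by
    refine isChain_append.mpr ⟨hgv, toWord_inv g ▸ isReduced_toWord, fun b hb a' ha' hab => ?_⟩
    rw [getLast?_append_of_ne_nil _ hv'] at hb
    simp only [invRev, head?_reverse, getLast?_map, Option.mem_map] at ha'
    obtain ⟨a, ha, rfl⟩ := ha'
    by_contra h
    exact hlast a ha b hb (Prod.ext hab (by simpa using h))
  rw [← hgvg.reduce_eq, ← toWord_mk, ← mul_mk, ← mul_mk, ← inv_mk, mk_toWord, mk_toWord]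

theorem exists_mem_toWord_prefix [Nontrivial ι] {N : Subgroup (FreeGroup ι)} [N.Normal]
    (hN : N ≠ ⊥) (g : FreeGroup ι) : ∃ h ∈ N, g.toWord <+: h.toWord := by
  obtain ⟨w, hwN, hw⟩ := N.bot_or_exists_ne_one.resolve_left hN
  rcases eq_or_ne g 1 with rfl | hg
  · exact ⟨1, N.one_mem, by simp⟩
  obtain ⟨c, hc⟩ : ∃ c, g.toWord.getLast? = some c :=
    Option.ne_none_iff_exists'.mp (by simpa using hg)
  obtain ⟨h₀, hh₀⟩ : ∃ h₀, w.toWord.head? = some h₀ :=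
    Option.ne_none_iff_exists'.mp (by simpa using hw)
  obtain ⟨l₀, hl₀⟩ : ∃ l₀, w.toWord.getLast? = some l₀ :=
    Option.ne_none_iff_exists'.mp (by simpa using hw)
  -- these are the three letters that could cancel against `x` in `g (x w x⁻¹) g⁻¹`
  obtain ⟨x, hxh, hxl, hxc⟩ := exists_letter_ne (h₀.1, !h₀.2) l₀ (c.1, !c.2)
  set v := mk [x] * w * (mk [x])⁻¹ with hv_def
  have hvN : v ∈ N := ‹N.Normal›.conj_mem w hwN _
  have hv1 : v ≠ 1 := by rwa [hv_def, Ne, conj_eq_one_iff]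
  have hv : v.toWord = x :: w.toWord ++ [(x.1, !x.2)] := by
    rw [toWord_mul_mul_inv hw] <;> simp [hh₀, hl₀, invRev]
    · exact fun h => hxh (eq_inv_letter_comm.mp h)
    · exact hxl.symm
  refine ⟨g * v * g⁻¹, ‹N.Normal›.conj_mem v hvN g, ?_⟩
  rw [toWord_mul_mul_inv hv1]
  · exact prefix_append_of_prefix (prefix_append _ _)
  · simp only [hc, hv, Option.mem_def, cons_append, head?_cons, Option.some.injEq, forall_eq']
    exact hxc
  · simp only [hc, hv, Option.mem_def, Option.some.injEq, getLast?_concat, forall_eq']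
    exact fun h => hxc (eq_inv_letter_comm.mpr h.symm)

section PrefixCosets

variable (N : Subgroup (FreeGroup ι)) [N.Normal]

def PrefixesIn (T : Set (FreeGroup ι ⧸ N)) (h : FreeGroup ι) : Prop :=
  ∀ p, p <+: h.toWord → (mk p : FreeGroup ι ⧸ N) ∈ T

variable {N} {T : Set (FreeGroup ι ⧸ N)}

theorem PrefixesIn.mul {x y : FreeGroup ι} (hxN : x ∈ N) (hx : PrefixesIn N T x)
    (hy : PrefixesIn N T y) : PrefixesIn N T (x * y) := by
  intro p hp
  obtain ⟨q, hq, hqp⟩ := exists_prefix_toWord_mk_eq hp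
  rw [← hqp]
  obtain ⟨u, hu⟩ := hq
  rcases append_eq_append_iff.mp hu with ⟨a', hxq, -⟩ | ⟨r, rfl, hyr⟩
  · exact hx q ⟨a', hxq.symm⟩
  · rw [← mul_mk, mk_toWord, QuotientGroup.mk_mul_of_mem_left hxN]
    exact hy r ⟨u, hyr.symm⟩

theorem PrefixesIn.inv {x : FreeGroup ι} (hxN : x ∈ N) (hx : PrefixesIn N T x) :
    PrefixesIn N T x⁻¹ := by
  rintro p ⟨u, hu⟩
  rw [toWord_inv] at hu
  have hx_word : invRev u ++ invRev p = x.toWord := by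
    rw [← invRev_append, hu, invRev_invRev]
  have hp : mk p = x⁻¹ * mk (invRev u) := by
    rw [eq_inv_mul_iff_mul_eq, ← mk_toWord (x := x), ← hx_word, ← mul_mk, mul_assoc,
      ← inv_mk (L := p), inv_mul_cancel, mul_one]
  rw [hp, QuotientGroup.mk_mul_of_mem_left (inv_mem hxN)]
  exact hx _ ⟨invRev p, hx_word⟩

theorem PrefixesIn.of_mem_closure {S : Set (FreeGroup ι)} (hSN : Subgroup.closure S ≤ N)
    (hT : (1 : FreeGroup ι ⧸ N) ∈ T) (hS : ∀ s ∈ S, PrefixesIn N T s) {h : FreeGroup ι}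
    (hh : h ∈ Subgroup.closure S) : PrefixesIn N T h := by
  induction hh using Subgroup.closure_induction with
  | mem s hs => exact hS s hs
  | one => simpa [PrefixesIn, ← one_eq_mk] using hT
  | mul x y hx _ ihx ihy => exact ihx.mul (hSN hx) ihy
  | inv x hx ihx => exact ihx.inv (hSN hx)

end PrefixCosets

theorem finiteIndex_of_normal_of_fg_of_nontrivial [Nontrivial ι] {N : Subgroup (FreeGroup ι)}
    [N.Normal] (hN : N ≠ ⊥) (hfg : N.FG) : N.FiniteIndex := by
  obtain ⟨S, hS⟩ := hfg
  let T : Set (FreeGroup ι ⧸ N) :=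
    insert 1 (⋃ s ∈ S, (fun p => (mk p : FreeGroup ι ⧸ N)) '' {p | p <+: s.toWord})
  have hT : T.Finite :=
    (S.finite_toSet.biUnion fun s _ => (finite_setOf_prefix _).image _).insert 1
  have hgenerators : ∀ s ∈ (S : Set (FreeGroup ι)), PrefixesIn N T s := fun s hs p hp =>
    Set.mem_insert_of_mem _ (Set.mem_biUnion hs ⟨p, hp, rfl⟩)
  have hprefixes : ∀ h ∈ N, PrefixesIn N T h := fun h hh =>
    PrefixesIn.of_mem_closure hS.le (Set.mem_insert _ _) hgenerators (hS ▸ hh)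
  have hcover (q : FreeGroup ι ⧸ N) : q ∈ T := by
    induction q using QuotientGroup.induction_on with | H g => ?_
    obtain ⟨h, hh, hgh⟩ := exists_mem_toWord_prefix hN g
    exact mk_toWord (x := g) ▸ hprefixes h hh _ hgh
  have : Finite (FreeGroup ι ⧸ N) := Set.finite_univ_iff.mp (hT.subset fun q _ => hcover q)
  exact Subgroup.finiteIndex_of_finite_quotient

omit [DecidableEq ι] in
theorem isCyclic_of_subsingleton [Subsingleton ι] : IsCyclic (FreeGroup ι) := by
  rcases isEmpty_or_nonempty ι with _ | ⟨⟨a⟩⟩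
  · infer_instance
  · have := uniqueOfSubsingleton a
    infer_instance

theorem finiteIndex_of_normal_of_fg {N : Subgroup (FreeGroup ι)} [N.Normal] (hN : N ≠ ⊥)
    (hfg : N.FG) : N.FiniteIndex := by
  rcases subsingleton_or_nontrivial ι with _ | _
  · have := isCyclic_of_subsingleton (ι := ι)
    exact IsCyclic.finiteIndex_of_ne_bot hN
  · exact finiteIndex_of_normal_of_fg_of_nontrivial hN hfg

end FreeGroup

theorem IsFreeGroup.finiteIndex_of_normal_of_fg {G : Type*} [Group G] [IsFreeGroup G]
    {N : Subgroup G} [N.Normal] (hN : N ≠ ⊥) (hfg : N.FG) : N.FiniteIndex := by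
  classical
  let e : G →* FreeGroup (Generators G) := toFreeGroup G
  have : (N.map e).Normal := .map inferInstance e (toFreeGroup G).surjective
  have hN' : N.map e ≠ ⊥ :=
    (Subgroup.map_eq_bot_iff_of_injective N (toFreeGroup G).injective).not.mpr hN
  rw [Subgroup.finiteIndex_iff, ← Subgroup.index_map_equiv N (toFreeGroup G),
    ← Subgroup.finiteIndex_iff]
  exact FreeGroup.finiteIndex_of_normal_of_fg hN' (hfg.map e)

theorem SemidirectProduct.not_isFreeGroup {N H : Type*} [Group N] [Group H] [Nontrivial N]
    [Infinite H] [Group.FG N] (φ : H →* MulAut N) : ¬ IsFreeGroup (N ⋊[φ] H) := by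
  intro
  have : (inl : N →* N ⋊[φ] H).range.Normal := by
    rw [range_inl_eq_ker_rightHom]
    infer_instance
  have hbot : (inl : N →* N ⋊[φ] H).range ≠ ⊥ := by
    rw [MonoidHom.range_eq_map, Ne, Subgroup.map_eq_bot_iff_of_injective _ inl_injective]
    exact top_ne_bot
  have hfg : (inl : N →* N ⋊[φ] H).range.FG := by
    rw [MonoidHom.range_eq_map]
    exact (Group.fg_def.mp inferInstance).map _
  have hindex : (inl : N →* N ⋊[φ] H).range.index = 0 := by
    rw [range_inl_eq_ker_rightHom, Subgroup.index_ker,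
      MonoidHom.range_eq_top.mpr rightHom_surjective, Subgroup.card_top,
      Nat.card_eq_zero_of_infinite]
  exact (IsFreeGroup.finiteIndex_of_normal_of_fg hbot hfg).index_ne_zero hindex

/-- A group with a nontrivial finitely generated normal subgroup of infinite index is
not free; in particular the suspension `F ⋊_φ ℤ` of an infinite finitely generated
group `F` is not a free group. -/
theorem not_free_of_fg_normal_infinite_index_and_suspension :
    (∀ (G : Type) [Group G] (N : Subgroup G), N.Normal → N ≠ ⊥ → N.FG →
      ¬ N.FiniteIndex → ¬ IsFreeGroup G) ∧
    (∀ (F : Type) [Group F], Infinite F → Group.FG F → ∀ φ : MulAut F,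
      ¬ IsFreeGroup (F ⋊[zpowersHom (MulAut F) φ] Multiplicative ℤ)) :=
  ⟨fun _ _ _ _ hN hfg hinf _ => hinf (IsFreeGroup.finiteIndex_of_normal_of_fg hN hfg),
    fun _ _ _ _ φ => SemidirectProduct.not_isFreeGroup (zpowersHom _ φ)⟩
end
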